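/- arXiv:2411.03488 — 5 statements merged into one kernel-verified Lean document; each statement's English description precedes it below -/
import Mathlib

section
/- Let n > 2, 0 < delta < 1, 0 < epsilon <= 1/2, and y,p,q,lambda,gamma in [0,1], r = p - q. The cooperation rate x = ((1-delta)y + delta q + delta(n-2)(q(lambda+gamma)+lambda epsilon r)) / (1 - delta r + delta(n-2)((lambda+gamma)(1-r)+2 lambda epsilon r)) equals 1 if and only if y = 1, p = 1, and (lambda = 0 or q = 1). -/
/-- For a generic game (`n > 2`, `ε > 0`), the homogeneous-population cooperation
rate is `1` iff `y = 1`, `p = 1`, and (`λ = 0` or `q = 1`). -/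
theorem coop_rate_eq_one_iff (n : ℕ) (δ ε y p q lam γ : ℝ)
    (hn : 2 < n) (hδ : 0 < δ) (hδ1 : δ < 1) (hε : 0 < ε) (hε' : ε ≤ 1 / 2)
    (hy : y ∈ Set.Icc (0 : ℝ) 1) (hp : p ∈ Set.Icc (0 : ℝ) 1)
    (hq : q ∈ Set.Icc (0 : ℝ) 1) (hlam : lam ∈ Set.Icc (0 : ℝ) 1)
    (hγ : γ ∈ Set.Icc (0 : ℝ) 1) :
    let r := p - q
    ((1 - δ) * y + δ * q + δ * ((n : ℝ) - 2) * (q * (lam + γ) + lam * ε * r)) /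
      (1 - δ * r + δ * ((n : ℝ) - 2) * ((lam + γ) * (1 - r) + 2 * lam * ε * r)) = 1 ↔
    y = 1 ∧ p = 1 ∧ (lam = 0 ∨ q = 1) := by
  obtain ⟨hy0, hy1⟩ := hy
  obtain ⟨hp0, hp1⟩ := hp
  obtain ⟨hq0, hq1⟩ := hq
  obtain ⟨hl0, hl1⟩ := hlam
  obtain ⟨hg0, hg1⟩ := hγ
  intro r
  simp only [show r = p - q from rfl]
  have hn2 : (2 : ℝ) < (n : ℝ) := by exact_mod_cast hn
  have hδn : 0 < δ * ((n : ℝ) - 2) := by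
    apply mul_pos hδ; linarith
  -- denominator is positive
  have hbr : 0 ≤ (lam + γ) * (1 - (p - q)) + 2 * lam * ε * (p - q) := by
    nlinarith [mul_nonneg hg0 (by linarith : (0:ℝ) ≤ 1 - (p - q)),
      mul_nonneg hl0 (by nlinarith : (0:ℝ) ≤ 1 - (p - q) + 2 * ε * (p - q))]
  have hD : 0 < 1 - δ * (p - q) + δ * ((n : ℝ) - 2) *
      ((lam + γ) * (1 - (p - q)) + 2 * lam * ε * (p - q)) := by
    nlinarith [mul_nonneg hδn.le hbr]
  rw [div_eq_one_iff_eq hD.ne']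
  constructor
  · intro h
    have key : (1 - δ) * (1 - y) + δ * (1 - p) +
        δ * ((n : ℝ) - 2) * (γ * (1 - p) + lam * ((1 - p) * (1 - ε) + ε * (1 - q))) = 0 := by
      linear_combination -h
    have hA : 0 ≤ (1 - δ) * (1 - y) := by
      apply mul_nonneg <;> linarith
    have hB : 0 ≤ δ * (1 - p) := by
      apply mul_nonneg <;> linarith
    have hCbr : 0 ≤ γ * (1 - p) + lam * ((1 - p) * (1 - ε) + ε * (1 - q)) := by
      have h1 : 0 ≤ γ * (1 - p) := by apply mul_nonneg <;> linarith
      have h2 : 0 ≤ lam * ((1 - p) * (1 - ε) + ε * (1 - q)) := by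
        apply mul_nonneg hl0
        nlinarith
      linarith
    have hC : 0 ≤ δ * ((n : ℝ) - 2) * (γ * (1 - p) + lam * ((1 - p) * (1 - ε) + ε * (1 - q))) :=
      mul_nonneg hδn.le hCbr
    have hA0 : (1 - δ) * (1 - y) = 0 := by linarith
    have hB0 : δ * (1 - p) = 0 := by linarith
    have hC0 : δ * ((n : ℝ) - 2) * (γ * (1 - p) + lam * ((1 - p) * (1 - ε) + ε * (1 - q))) = 0 := by
      linarith
    have hy1' : y = 1 := by
      rcases mul_eq_zero.mp hA0 with h' | h' <;> linarith
    have hp1' : p = 1 := by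
      rcases mul_eq_zero.mp hB0 with h' | h' <;> linarith
    refine ⟨hy1', hp1', ?_⟩
    subst hp1'
    have hCbr0 : γ * (1 - 1) + lam * ((1 - 1) * (1 - ε) + ε * (1 - q)) = 0 := by
      rcases mul_eq_zero.mp hC0 with h' | h'
      · exact absurd h' hδn.ne'
      · exact h'
    have : lam * (ε * (1 - q)) = 0 := by linarith [hCbr0]
    rcases mul_eq_zero.mp this with h' | h'
    · exact Or.inl h'
    · rcases mul_eq_zero.mp h' with h'' | h''
      · exact absurd h'' hε.ne'
      · exact Or.inr (by linarith)
  · rintro ⟨rfl, rfl, rfl | rfl⟩ <;> ring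
end

section
/- Let n > 2, 0 < delta < 1, epsilon in [0,1/2], lambda, gamma in [0,1], r in [-1,1]. Define B3 = delta*gamma*r*(n-2)/(1 + delta(n-2)(lambda+gamma)) and C3 = delta*lambda*r*(1-2epsilon)/(1 - delta r + delta(lambda+gamma)(n-2) - delta r (n-3)(lambda + gamma - 2 lambda epsilon)). Then B3*C3 < 1. -/
set_option maxHeartbeats 1000000 in
/-- The coefficients `B₃` and `C₃` of the linear reputation relations satisfy
`B₃ * C₃ < 1`. -/
theorem B3_mul_C3_lt_one (n : ℕ) (δ ε lam γ r : ℝ)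
    (hn : 2 < n) (hδ : 0 < δ) (hδ1 : δ < 1) (hε : 0 ≤ ε) (hε' : ε ≤ 1 / 2)
    (hlam : lam ∈ Set.Icc (0 : ℝ) 1) (hγ : γ ∈ Set.Icc (0 : ℝ) 1)
    (hr : r ∈ Set.Icc (-1 : ℝ) 1) :
    let B3 := δ * γ * r * ((n : ℝ) - 2) / (1 + δ * ((n : ℝ) - 2) * (lam + γ))
    let C3 := δ * lam * r * (1 - 2 * ε) /
      (1 - δ * r + δ * (lam + γ) * ((n : ℝ) - 2) - δ * r * ((n : ℝ) - 3) * (lam + γ - 2 * lam * ε))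
    B3 * C3 < 1 := by
  obtain ⟨hl0, hl1⟩ := hlam
  obtain ⟨hg0, hg1⟩ := hγ
  obtain ⟨hrm, hr1⟩ := hr
  have hm : (1 : ℝ) ≤ (n : ℝ) - 2 := by
    have h3 : (3 : ℕ) ≤ n := hn
    have : (3 : ℝ) ≤ (n : ℝ) := by exact_mod_cast h3
    linarith
  set m : ℝ := (n : ℝ) - 2 with hmdef
  intro B3 C3
  set num1 : ℝ := δ * γ * r * m with hnum1
  set den1 : ℝ := 1 + δ * m * (lam + γ) with hden1
  set num2 : ℝ := δ * lam * r * (1 - 2 * ε) with hnum2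
  set den2 : ℝ := 1 - δ * r + δ * (lam + γ) * m - δ * r * ((n : ℝ) - 3) * (lam + γ - 2 * lam * ε)
    with hden2
  have hn3 : (n : ℝ) - 3 = m - 1 := by ring
  -- key nonnegative products
  have hs : (0:ℝ) ≤ lam + γ - 2 * lam * ε := by nlinarith
  have hA : (0:ℝ) ≤ lam + γ - r * (lam + γ - 2 * lam * ε) := by
    nlinarith [mul_nonneg hs (by linarith : (0:ℝ) ≤ 1 - r)]
  have p1 : (0:ℝ) ≤ δ * (1 - r) * (1 - γ) :=
    mul_nonneg (mul_nonneg hδ.le (by linarith)) (by linarith)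
  have p2 : (0:ℝ) ≤ δ * m * (lam + γ - r * (lam + γ - 2 * lam * ε)) :=
    mul_nonneg (mul_nonneg hδ.le (by linarith)) hA
  have p3 : (0:ℝ) ≤ δ * (m - 1) * (lam + γ - r * (lam + γ - 2 * lam * ε)) :=
    mul_nonneg (mul_nonneg hδ.le (by linarith)) hA
  have hc : (0:ℝ) ≤ 1 - lam + 2 * lam * ε := by nlinarith
  have p4 : (0:ℝ) ≤ δ * (1 - r) * (1 - lam + 2 * lam * ε) :=
    mul_nonneg (mul_nonneg hδ.le (by linarith)) hc
  have p5 : (0:ℝ) ≤ δ * (1 + r) * (1 - lam + 2 * lam * ε) :=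
    mul_nonneg (mul_nonneg hδ.le (by linarith)) hc
  have p6 : (0:ℝ) ≤ δ * (1 + r) * (1 - γ) :=
    mul_nonneg (mul_nonneg hδ.le (by linarith)) (by linarith)
  have p7 : (0:ℝ) ≤ δ * lam * ε := by positivity
  have hden1pos : 0 < den1 := by
    have : 0 ≤ δ * m * (lam + γ) := by positivity
    linarith
  have hden2pos : 0 < den2 := by
    rw [hden2, hn3]
    nlinarith [p1, p3, mul_nonneg (mul_nonneg hδ.le hl0) hg0,
      mul_nonneg hδ.le (add_nonneg hl0 hg0)]
  have h1 : |num1| < den1 := by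
    rw [abs_lt, hnum1, hden1]
    constructor
    · nlinarith [mul_nonneg (mul_nonneg (mul_nonneg hδ.le hg0)
        (by linarith : (0:ℝ) ≤ 1 + r)) (by linarith : (0:ℝ) ≤ m),
        mul_nonneg (mul_nonneg hδ.le hl0) (by linarith : (0:ℝ) ≤ m)]
    · nlinarith [mul_nonneg (mul_nonneg (mul_nonneg hδ.le hg0)
        (by linarith : (0:ℝ) ≤ 1 - r)) (by linarith : (0:ℝ) ≤ m),
        mul_nonneg (mul_nonneg hδ.le hl0) (by linarith : (0:ℝ) ≤ m)]
  have h2 : |num2| ≤ den2 := by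
    rw [abs_le, hnum2, hden2, hn3]
    constructor
    · -- den2 + num2 = 1 - δ r (1 - lam + 2 lam ε) - δ r γ + δ(lam+γ) + δ(m-1)(lam+γ-rs) ≥ 0
      nlinarith [p3, p5, p6, mul_nonneg hδ.le (add_nonneg hl0 hg0)]
    · -- den2 - num2 = 1 - δ r (1-γ) + δ m (lam+γ-rs) ≥ 0
      nlinarith [p1, p2]
  have key : num1 * num2 < den1 * den2 :=
    calc num1 * num2 ≤ |num1 * num2| := le_abs_self _
    _ = |num1| * |num2| := abs_mul _ _
    _ ≤ |num1| * den2 := mul_le_mul_of_nonneg_left h2 (abs_nonneg _)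
    _ < den1 * den2 := mul_lt_mul_of_pos_right h1 hden2pos
  show num1 / den1 * (num2 / den2) < 1
  rw [div_mul_div_comm, div_lt_one (by positivity)]
  exact key
end

section
/- Let n > 2, 0 < delta < 1, epsilon in [0,1/2], b > c > 0, lambda, gamma in [0,1], r in [-1,1]. Define A = 1 + delta(n-2)(lambda+gamma), D = delta(1 + (n-3)(lambda+gamma-2 lambda epsilon)), Lambda1 = delta^2 gamma (n-2)(gamma b + lambda c (1-2epsilon)) - b delta D (1 + lambda(n-2)(1-2epsilon)), Lambda2 = b delta A (1 + lambda(n-2)(1-2epsilon)) + c A D, Lambda3 = c A^2. With K2 = (B2 + B3 C2)/(1 - B3 C3) as defined from the coefficients B2, B3, C2, C3 of the resident strategy, we have sign(K2 b - c) = sign(Lambda1 r^2 + Lambda2 r - Lambda3); in particular K2 b - c = 0 iff Lambda1 r^2 + Lambda2 r - Lambda3 = 0, and likewise for strict inequalities in both directions. -/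
/-!
Clearing the denominators `A`, `E` and `1 - B₃ C₃` turns `(K₂ b - c) (1 - B₃ C₃) A E` into the
quadratic `Λ₁ r² + Λ₂ r - Λ₃`, using `E = A - r D`. So it suffices that the multiplier is positive:
`A > 0` is clear, `E ≥ A - D > δ (λ + γ) ≥ 0` because `D ≥ 0` and `r ≤ 1`, and `1 - B₃ C₃ > 0`
because `|B₃| < 1` and `|C₃| < 1`.
-/

section

variable {α : Type*} [Ring α] [LinearOrder α] [IsStrictOrderedRing α]

theorem sign_iff_of_mul_pos_eq {x p q : α} (hp : 0 < p) (h : x * p = q) :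
    (x = 0 ↔ q = 0) ∧ (x > 0 ↔ q > 0) ∧ (x < 0 ↔ q < 0) := by
  subst h
  refine ⟨by simp [hp.ne'], (mul_pos_iff_of_pos_right hp).symm, ?_⟩
  exact ⟨fun h => mul_neg_of_neg_of_pos h hp, fun h => neg_of_mul_neg_left h hp.le⟩

theorem one_sub_mul_pos_of_abs_lt_one {x y : α} (hx : |x| < 1) (hy : |y| ≤ 1) :
    0 < 1 - x * y := by
  have hxy : |x * y| < 1 := by
    rw [abs_mul]
    exact mul_lt_one_of_nonneg_of_lt_one_left (abs_nonneg x) hx hy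
  exact sub_pos.mpr ((le_abs_self _).trans_lt hxy)

end

theorem div_one_sub_mul_sub_mul_eq {α : Type*} [Field α] {A E B₂ B₃ C₂ C₃ b c : α}
    (hd : 1 - B₃ * C₃ ≠ 0) :
    ((B₂ + B₃ * C₂) / (1 - B₃ * C₃) * b - c) * ((1 - B₃ * C₃) * (A * E)) =
      b * (B₂ * A * E + B₃ * A * (C₂ * E)) - c * (A * E - B₃ * A * (C₃ * E)) := by
  field_simp

noncomputable def residentA (n δ lam γ : ℝ) : ℝ := 1 + δ * (n - 2) * (lam + γ)

noncomputable def residentD (n δ ε lam γ : ℝ) : ℝ :=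
  δ * (1 + (n - 3) * (lam + γ - 2 * lam * ε))

section Coefficients

variable {n δ ε lam γ r : ℝ}

theorem residentA_pos (hn : 2 ≤ n) (hδ : 0 ≤ δ) (hlam : 0 ≤ lam) (hγ : 0 ≤ γ) :
    0 < residentA n δ lam γ := by
  have : 0 ≤ n - 2 := by linarith
  unfold residentA
  positivity

theorem residentD_nonneg (hn : 3 ≤ n) (hδ : 0 ≤ δ) (hε' : ε ≤ 1 / 2) (hlam : 0 ≤ lam)
    (hγ : 0 ≤ γ) : 0 ≤ residentD n δ ε lam γ := by
  have : 0 ≤ n - 3 := by linarith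
  have : 0 ≤ 1 - 2 * ε := by linarith
  have hsplit : lam + γ - 2 * lam * ε = lam * (1 - 2 * ε) + γ := by ring
  unfold residentD
  rw [hsplit]
  positivity

theorem lt_residentA_sub_mul_residentD (hn : 3 ≤ n) (hδ : 0 ≤ δ) (hδ1 : δ < 1) (hε : 0 ≤ ε)
    (hε' : ε ≤ 1 / 2) (hlam : 0 ≤ lam) (hγ : 0 ≤ γ) (hr : r ≤ 1) :
    δ * (lam + γ) < residentA n δ lam γ - r * residentD n δ ε lam γ := by
  have : 0 ≤ n - 3 := by linarith
  have : 0 ≤ 2 * δ * (n - 3) * lam * ε := by positivity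
  have hgap : δ * (lam + γ) < residentA n δ lam γ - residentD n δ ε lam γ := by
    unfold residentA residentD
    linarith
  nlinarith [residentD_nonneg hn hδ hε' hlam hγ]

theorem residentA_sub_mul_residentD_pos (hn : 3 ≤ n) (hδ : 0 ≤ δ) (hδ1 : δ < 1) (hε : 0 ≤ ε)
    (hε' : ε ≤ 1 / 2) (hlam : 0 ≤ lam) (hγ : 0 ≤ γ) (hr : r ≤ 1) :
    0 < residentA n δ lam γ - r * residentD n δ ε lam γ :=
  lt_of_le_of_lt (by positivity) (lt_residentA_sub_mul_residentD hn hδ hδ1 hε hε' hlam hγ hr)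

theorem abs_div_residentA_lt_one (hn : 2 ≤ n) (hδ : 0 ≤ δ) (hlam : 0 ≤ lam) (hγ : 0 ≤ γ)
    (hr : |r| ≤ 1) : |δ * γ * r * (n - 2) / residentA n δ lam γ| < 1 := by
  have hA := residentA_pos hn hδ hlam hγ
  have : 0 ≤ n - 2 := by linarith
  rw [abs_div, abs_of_pos hA, div_lt_one hA]
  calc |δ * γ * r * (n - 2)| = δ * γ * (n - 2) * |r| := by
        rw [abs_mul, abs_mul, abs_mul, abs_of_nonneg hδ, abs_of_nonneg hγ, abs_of_nonneg this]
        ring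
    _ ≤ δ * (n - 2) * (lam + γ) := by
        have hγr := mul_le_mul_of_nonneg_left hr (by positivity : 0 ≤ δ * γ * (n - 2))
        have : 0 ≤ δ * (n - 2) * lam := by positivity
        linarith
    _ < residentA n δ lam γ := by unfold residentA; linarith

theorem abs_div_residentE_lt_one (hn : 3 ≤ n) (hδ : 0 ≤ δ) (hδ1 : δ < 1) (hε : 0 ≤ ε)
    (hε' : ε ≤ 1 / 2) (hlam : 0 ≤ lam) (hγ : 0 ≤ γ) (hr : |r| ≤ 1) :
    |δ * lam * r * (1 - 2 * ε) / (residentA n δ lam γ - r * residentD n δ ε lam γ)| < 1 := by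
  have hE := lt_residentA_sub_mul_residentD hn hδ hδ1 hε hε' hlam hγ (le_of_abs_le hr)
  have hEpos := residentA_sub_mul_residentD_pos hn hδ hδ1 hε hε' hlam hγ (le_of_abs_le hr)
  have : 0 ≤ 1 - 2 * ε := by linarith
  rw [abs_div, abs_of_pos hEpos, div_lt_one hEpos]
  calc |δ * lam * r * (1 - 2 * ε)| = δ * lam * (|r| * (1 - 2 * ε)) := by
        rw [abs_mul, abs_mul, abs_mul, abs_of_nonneg hδ, abs_of_nonneg hlam, abs_of_nonneg this]
        ring
    _ ≤ δ * (lam + γ) := by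
        have : |r| * (1 - 2 * ε) ≤ 1 := by nlinarith [abs_nonneg r]
        have := mul_le_mul_of_nonneg_left this (mul_nonneg hδ hlam)
        linarith [mul_nonneg hδ hγ]
    _ < _ := hE

end Coefficients

theorem slope_sign_iff_quadratic_sign_general (n : ℕ) (δ ε b c lam γ r : ℝ)
    (hn : 2 < n) (hδ : 0 < δ) (hδ1 : δ < 1) (hε : 0 ≤ ε) (hε' : ε ≤ 1 / 2)
    (hlam : lam ∈ Set.Icc (0 : ℝ) 1) (hγ : γ ∈ Set.Icc (0 : ℝ) 1)
    (hr : r ∈ Set.Icc (-1 : ℝ) 1) :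
    let A := 1 + δ * ((n : ℝ) - 2) * (lam + γ)
    let D := δ * (1 + ((n : ℝ) - 3) * (lam + γ - 2 * lam * ε))
    let E := 1 - δ * r + δ * (lam + γ) * ((n : ℝ) - 2) - δ * r * ((n : ℝ) - 3) * (lam + γ - 2 * lam * ε)
    let Λ1 := δ ^ 2 * γ * ((n : ℝ) - 2) * (γ * b + lam * c * (1 - 2 * ε)) -
      b * δ * D * (1 + lam * ((n : ℝ) - 2) * (1 - 2 * ε))
    let Λ2 := b * δ * A * (1 + lam * ((n : ℝ) - 2) * (1 - 2 * ε)) + c * A * D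
    let Λ3 := c * A ^ 2
    let B2 := δ * r * (1 + lam * ((n : ℝ) - 2) * (1 - 2 * ε)) / A
    let B3 := δ * γ * r * ((n : ℝ) - 2) / A
    let C2 := δ * γ * r / E
    let C3 := δ * lam * r * (1 - 2 * ε) / E
    let K2 := (B2 + B3 * C2) / (1 - B3 * C3)
    (K2 * b - c = 0 ↔ Λ1 * r ^ 2 + Λ2 * r - Λ3 = 0) ∧
    (K2 * b - c > 0 ↔ Λ1 * r ^ 2 + Λ2 * r - Λ3 > 0) ∧
    (K2 * b - c < 0 ↔ Λ1 * r ^ 2 + Λ2 * r - Λ3 < 0) := by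
  obtain ⟨hlam0, -⟩ := hlam
  obtain ⟨hγ0, -⟩ := hγ
  have hn3 : (3 : ℝ) ≤ n := by exact_mod_cast hn
  have hr' : |r| ≤ 1 := abs_le.mpr hr
  intro A D E Λ1 Λ2 Λ3 B2 B3 C2 C3 K2
  have hA : 0 < A := residentA_pos (by linarith) hδ.le hlam0 hγ0
  have hE_eq : E = residentA n δ lam γ - r * residentD n δ ε lam γ := by
    simp only [E, residentA, residentD]
    ring
  have hE : 0 < E := hE_eq ▸ residentA_sub_mul_residentD_pos hn3 hδ.le hδ1 hε hε' hlam0 hγ0 hr.2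
  have hden : 0 < 1 - B3 * C3 := by
    refine one_sub_mul_pos_of_abs_lt_one
      (abs_div_residentA_lt_one (by linarith) hδ.le hlam0 hγ0 hr') (le_of_lt ?_)
    simpa only [C3, hE_eq] using abs_div_residentE_lt_one hn3 hδ.le hδ1 hε hε' hlam0 hγ0 hr'
  have key : (K2 * b - c) * ((1 - B3 * C3) * (A * E)) = Λ1 * r ^ 2 + Λ2 * r - Λ3 := by
    rw [div_one_sub_mul_sub_mul_eq hden.ne', div_mul_cancel₀ _ hA.ne', div_mul_cancel₀ _ hA.ne',
      div_mul_cancel₀ _ hE.ne', div_mul_cancel₀ _ hE.ne']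
    simp only [Λ1, Λ2, Λ3, A, D, E]
    ring
  exact sign_iff_of_mul_pos_eq (by positivity) key

/-- The sign of the slope `K₂ b - c` of the mutant payoff relation agrees with the sign
of the quadratic `Λ₁ r² + Λ₂ r - Λ₃`. -/
theorem slope_sign_iff_quadratic_sign (n : ℕ) (δ ε b c lam γ r : ℝ)
    (hn : 2 < n) (hδ : 0 < δ) (hδ1 : δ < 1) (hε : 0 ≤ ε) (hε' : ε ≤ 1 / 2)
    (hc : 0 < c) (hbc : c < b)
    (hlam : lam ∈ Set.Icc (0 : ℝ) 1) (hγ : γ ∈ Set.Icc (0 : ℝ) 1)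
    (hr : r ∈ Set.Icc (-1 : ℝ) 1) :
    let A := 1 + δ * ((n : ℝ) - 2) * (lam + γ)
    let D := δ * (1 + ((n : ℝ) - 3) * (lam + γ - 2 * lam * ε))
    let E := 1 - δ * r + δ * (lam + γ) * ((n : ℝ) - 2) - δ * r * ((n : ℝ) - 3) * (lam + γ - 2 * lam * ε)
    let Λ1 := δ ^ 2 * γ * ((n : ℝ) - 2) * (γ * b + lam * c * (1 - 2 * ε)) -
      b * δ * D * (1 + lam * ((n : ℝ) - 2) * (1 - 2 * ε))
    let Λ2 := b * δ * A * (1 + lam * ((n : ℝ) - 2) * (1 - 2 * ε)) + c * A * D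
    let Λ3 := c * A ^ 2
    let B2 := δ * r * (1 + lam * ((n : ℝ) - 2) * (1 - 2 * ε)) / A
    let B3 := δ * γ * r * ((n : ℝ) - 2) / A
    let C2 := δ * γ * r / E
    let C3 := δ * lam * r * (1 - 2 * ε) / E
    let K2 := (B2 + B3 * C2) / (1 - B3 * C3)
    (K2 * b - c = 0 ↔ Λ1 * r ^ 2 + Λ2 * r - Λ3 = 0) ∧
    (K2 * b - c > 0 ↔ Λ1 * r ^ 2 + Λ2 * r - Λ3 > 0) ∧
    (K2 * b - c < 0 ↔ Λ1 * r ^ 2 + Λ2 * r - Λ3 < 0) :=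
  slope_sign_iff_quadratic_sign_general n δ ε b c lam γ r hn hδ hδ1 hε hε' hlam hγ hr
end

section
/- Let n > 2, b > c > 0, and c/b < delta < 1. Setting lambda = 0, gamma = 1 in the coefficients Lambda1, Lambda2, Lambda3 (with epsilon arbitrary), we have Lambda1 = 0, and the unique q in [0,1) solving Lambda2 (1-q) - Lambda3 = 0 is q*_G = 1 - (c + c delta(n-2))/(b delta + c delta(n-2)). Moreover, q*_G in [0,1) if and only if delta > c/b. -/
/-- Existence and uniqueness of the generic cooperative Nash equilibrium with pure
generalized reciprocity (`λ = 0`, `γ = 1`). -/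
theorem pure_GR_cooperative_nash (n : ℕ) (δ ε b c : ℝ)
    (hn : 2 < n) (hc : 0 < c) (hbc : c < b)
    (hδlow : c / b < δ) (hδ1 : δ < 1)
    (hε : 0 ≤ ε) (hε' : ε ≤ 1 / 2) :
    let lam : ℝ := 0
    let γ : ℝ := 1
    let A := 1 + δ * ((n : ℝ) - 2) * (lam + γ)
    let D := δ * (1 + ((n : ℝ) - 3) * (lam + γ - 2 * lam * ε))
    let Λ1 := δ ^ 2 * γ * ((n : ℝ) - 2) * (γ * b + lam * c * (1 - 2 * ε)) -
      b * δ * D * (1 + lam * ((n : ℝ) - 2) * (1 - 2 * ε))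
    let Λ2 := b * δ * A * (1 + lam * ((n : ℝ) - 2) * (1 - 2 * ε)) + c * A * D
    let Λ3 := c * A ^ 2
    let qG := 1 - (c + c * δ * ((n : ℝ) - 2)) / (b * δ + c * δ * ((n : ℝ) - 2))
    Λ1 = 0 ∧
    (∀ q : ℝ, 0 ≤ q → q < 1 → (Λ2 * (1 - q) - Λ3 = 0 ↔ q = qG)) ∧
    (qG ∈ Set.Ico (0 : ℝ) 1 ↔ c / b < δ) := by
  have hb : 0 < b := hc.trans hbc
  have hδ : 0 < δ := lt_trans (div_pos hc hb) hδlow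
  have hn' : (3 : ℝ) ≤ (n : ℝ) := by exact_mod_cast hn
  have hcb : c < b * δ := (div_lt_iff₀ hb).mp hδlow |>.trans_eq (mul_comm δ b)
  intro lam γ A D Λ1 Λ2 Λ3 qG
  have hA : 0 < A := by simp only [A, lam, γ]; nlinarith
  have hn2 : (0:ℝ) < (n : ℝ) - 2 := by linarith
  have hP : 0 < b * δ + c * δ * ((n : ℝ) - 2) :=
    add_pos (mul_pos hb hδ) (mul_pos (mul_pos hc hδ) hn2)
  have hN : 0 < c + c * δ * ((n : ℝ) - 2) :=
    add_pos hc (mul_pos (mul_pos hc hδ) hn2)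
  refine ⟨by simp only [Λ1, lam, γ, D]; ring, ?_, ?_⟩
  · intro q hq0 hq1
    constructor
    · intro h
      simp only [Λ2, Λ3, lam, γ, A, D] at h
      have h2 : (b * δ + c * δ * ((n : ℝ) - 2)) * (1 - q)
          - c * (1 + δ * ((n : ℝ) - 2)) = 0 := by
        have hA' : (0:ℝ) < 1 + δ * ((n : ℝ) - 2) := by nlinarith
        have hz : (1 + δ * ((n : ℝ) - 2)) *
            ((b * δ + c * δ * ((n : ℝ) - 2)) * (1 - q)
              - c * (1 + δ * ((n : ℝ) - 2))) = 0 := by linear_combination h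
        rcases mul_eq_zero.mp hz with h' | h'
        · exact absurd h' hA'.ne'
        · exact h'
      simp only [qG]
      field_simp
      linarith [h2]
    · intro h
      subst h
      simp only [Λ2, Λ3, lam, γ, A, D, qG]
      field_simp
      ring
  · constructor
    · intro _; exact hδlow
    · intro _
      constructor
      · simp only [qG, sub_nonneg]
        rw [div_le_one hP]
        nlinarith
      · simp only [qG, sub_lt_self_iff]
        exact div_pos hN hP
end

section
/- Let n >= 3, zeta1 = (n-2)/C(n,2), zeta2 = C(n-2,2)/C(n,2), and lambda, gamma in [0,1]. Then (1/C(n,2)) * sum over s >= 0 of sum over l, m >= 0 with l + m <= s of [s!/(l! m! (s-l-m)!)] * zeta1^{l+m} * zeta2^{s-l-m} * (1-lambda)^l * (1-gamma)^m = 1/(1 + (n-2)(lambda+gamma)). -/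
/-!
Summing over `l, m` first is the trinomial theorem, so the inner double sum is `r ^ s` with
`r = ζ₁ (1 - λ) + ζ₁ (1 - γ) + ζ₂`. Since `ζ₂ + 2 ζ₁ + 1 / C(n,2) = 1`, this is
`r = 1 - (1 + (n - 2)(λ + γ)) / C(n,2)`, and the geometric series gives the closed form.
-/

open Finset

lemma factorial_div_factorial_mul_factorial_mul_factorial {K : Type*} [Field K] [CharZero K]
    {s l m : ℕ} (hl : l ≤ s) (hm : m ≤ s - l) :
    (s.factorial : K) / (l.factorial * m.factorial * (s - l - m).factorial)
      = s.choose l * (s - l).choose m := by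
  have h : ((s - l).factorial : K) ≠ 0 := Nat.cast_ne_zero.mpr (Nat.factorial_ne_zero _)
  rw [Nat.cast_choose K hl, Nat.cast_choose K hm]
  field_simp

lemma sum_range_sum_range_trinomial {K : Type*} [Field K] [CharZero K] (a b c : K) (s : ℕ) :
    ∑ l ∈ range (s + 1), ∑ m ∈ range (s + 1 - l),
      (s.factorial : K) / (l.factorial * m.factorial * (s - l - m).factorial)
        * a ^ l * b ^ m * c ^ (s - l - m)
      = (a + b + c) ^ s := by
  rw [add_assoc, add_pow]
  refine sum_congr rfl fun l hl => ?_
  have hls : l ≤ s := mem_range_succ_iff.mp hl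
  rw [add_pow, mul_sum, sum_mul, Nat.succ_sub hls]
  refine sum_congr rfl fun m hm => ?_
  have hms : m ≤ s - l := mem_range_succ_iff.mp hm
  rw [factorial_div_factorial_mul_factorial_mul_factorial hls hms, Nat.sub_sub]
  ring

lemma cast_choose_two_eq {n : ℕ} (hn : 2 ≤ n) :
    (n.choose 2 : ℝ) = ((n - 2).choose 2 : ℕ) + 2 * ((n : ℝ) - 2) + 1 := by
  obtain ⟨k, rfl⟩ : ∃ k, n = k + 2 := ⟨n - 2, by omega⟩
  simp only [Nat.choose_succ_succ, Nat.choose_one_right, Nat.choose_zero_right,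
    Nat.add_sub_cancel]
  push_cast
  ring

lemma one_div_mul_tsum_geometric_one_sub_div {N D : ℝ} (hD : 0 < D) (hDN : D < 2 * N) :
    1 / N * ∑' s : ℕ, (1 - D / N) ^ s = 1 / D := by
  have hN : 0 < N := by linarith
  have hpos : 0 < D / N := div_pos hD hN
  have hlt : D / N < 2 := by rw [div_lt_iff₀ hN]; linarith
  have hr : |1 - D / N| < 1 := abs_lt.mpr ⟨by linarith, by linarith⟩
  rw [tsum_geometric_of_abs_lt_one hr, sub_sub_cancel]
  field_simp

/-- Closed form of the series defining the effective likelihood of direct reciprocity: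
`(1/C(n,2)) ∑_{s≥0} ∑_{l+m≤s} s!/(l! m! (s-l-m)!) ζ₁^{l+m} ζ₂^{s-l-m} (1-λ)^l (1-γ)^m
  = 1/(1+(n-2)(λ+γ))`. -/
theorem alphaD_series_closed_form (n : ℕ) (lam γ : ℝ)
    (hn : 3 ≤ n) (hlam : lam ∈ Set.Icc (0 : ℝ) 1) (hγ : γ ∈ Set.Icc (0 : ℝ) 1) :
    let ζ1 : ℝ := ((n : ℝ) - 2) / (n.choose 2 : ℝ)
    let ζ2 : ℝ := ((n - 2).choose 2 : ℝ) / (n.choose 2 : ℝ)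
    (1 / (n.choose 2 : ℝ)) *
      ∑' s : ℕ, ∑ l ∈ Finset.range (s + 1), ∑ m ∈ Finset.range (s + 1 - l),
        ((s.factorial : ℝ) / ((l.factorial : ℝ) * (m.factorial : ℝ) *
            ((s - l - m).factorial : ℝ))) *
          ζ1 ^ (l + m) * ζ2 ^ (s - l - m) * (1 - lam) ^ l * (1 - γ) ^ m
      = 1 / (1 + ((n : ℝ) - 2) * (lam + γ)) := by
  intro ζ1 ζ2
  obtain ⟨hlam0, hlam1⟩ := hlam
  obtain ⟨hγ0, hγ1⟩ := hγ
  have hN := cast_choose_two_eq (by omega : 2 ≤ n)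
  have hn3 : (3 : ℝ) ≤ n := by exact_mod_cast hn
  have hC : (0 : ℝ) ≤ ((n - 2).choose 2 : ℕ) := Nat.cast_nonneg _
  have hN0 : (n.choose 2 : ℝ) ≠ 0 := by rw [hN]; linarith
  have hr : ζ1 * (1 - lam) + ζ1 * (1 - γ) + ζ2
      = 1 - (1 + ((n : ℝ) - 2) * (lam + γ)) / n.choose 2 := by
    simp only [ζ1, ζ2]
    field_simp
    linear_combination -hN
  have hseries : ∀ s : ℕ, ∑ l ∈ range (s + 1), ∑ m ∈ range (s + 1 - l),
      (s.factorial : ℝ) / (l.factorial * m.factorial * (s - l - m).factorial)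
        * ζ1 ^ (l + m) * ζ2 ^ (s - l - m) * (1 - lam) ^ l * (1 - γ) ^ m
      = (ζ1 * (1 - lam) + ζ1 * (1 - γ) + ζ2) ^ s := by
    intro s
    rw [← sum_range_sum_range_trinomial]
    refine sum_congr rfl fun l _ => sum_congr rfl fun m _ => ?_
    rw [pow_add, mul_pow, mul_pow]
    ring
  rw [tsum_congr hseries, hr]
  exact one_div_mul_tsum_geometric_one_sub_div (by nlinarith) (by rw [hN]; nlinarith)
end
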